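/- arXiv:2406.06242 — 9 statements merged into one kernel-verified Lean document; each statement's English description precedes it below -/
import Mathlib

section
/- Let μ > τ ≥ 1 be integers and let α₁ ≤ α₂ ≤ … ≤ α_μ be positive real numbers with mean av = (1/μ)·Σ_{i=1}^{μ} α_i, satisfying Hertling's equality (1/μ)·Σ_{i=1}^{μ}(α_i − av)² = (1/12)(α_μ − α₁). Let T ⊆ {1,…,μ} with |T| = τ, such that min_{i∈T} α_i = α₁ and av_T := (1/τ)·Σ_{i∈T} α_i ≤ av. If (μ/12)·(α_μ − max_{i∈T} α_i) ≥ (μ − τ)·α_μ², then (1/τ)·Σ_{i∈T}(α_i − av_T)² > (1/12)·(max_{i∈T} α_i − α₁); that is, the generalized Hertling inequality Var_T ≤ (1/12)(max_T − min_T) fails for T. (This is the arithmetic content of Theorem 3.1: for a semi-weighted-homogeneous isolated hypersurface singularity with μ ≠ τ, the spectrum satisfies Hertling's equality, and under condition (3.3) the generalized Hertling conjecture for the Tjurina spectrum fails.) -/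
set_option maxHeartbeats 1000000


/-- Arithmetic content of Theorem 3.1: let `μ > τ ≥ 1`, let `α 1 ≤ … ≤ α μ` be positive
reals whose variance satisfies Hertling's equality, and let `T ⊆ {1,…,μ}` with `|T| = τ`,
`min_T α = α 1` and `av_T ≤ av`.  If `(μ/12)·(α μ − max_T α) ≥ (μ−τ)·(α μ)²` then the
generalized Hertling inequality fails for `T`. -/
theorem stmt0 (μ τ : ℕ) (hτ : 1 ≤ τ) (hμτ : τ < μ)
    (α : ℕ → ℝ)
    (hpos : ∀ i ∈ Finset.Icc 1 μ, 0 < α i)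
    (hmono : ∀ i j, 1 ≤ i → i ≤ j → j ≤ μ → α i ≤ α j)
    (av : ℝ) (hav : av = (1 / (μ : ℝ)) * ∑ i ∈ Finset.Icc 1 μ, α i)
    (hHertling : (1 / (μ : ℝ)) * ∑ i ∈ Finset.Icc 1 μ, (α i - av) ^ 2
      = (1 / 12) * (α μ - α 1))
    (T : Finset ℕ) (hT : T ⊆ Finset.Icc 1 μ) (hcard : T.card = τ)
    (hTne : T.Nonempty)
    (hmin : T.inf' hTne α = α 1)
    (avT : ℝ) (havT : avT = (1 / (τ : ℝ)) * ∑ i ∈ T, α i)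
    (havle : avT ≤ av)
    (hcond : ((μ : ℝ) / 12) * (α μ - T.sup' hTne α) ≥ ((μ : ℝ) - τ) * (α μ) ^ 2) :
    (1 / (τ : ℝ)) * ∑ i ∈ T, (α i - avT) ^ 2 > (1 / 12) * (T.sup' hTne α - α 1) := by
  have hτpos : (0:ℝ) < τ := by exact_mod_cast hτ
  have hμpos : (0:ℝ) < μ := by exact_mod_cast lt_of_le_of_lt (Nat.zero_le τ) hμτ
  have hτle : (τ:ℝ) ≤ (μ:ℝ) := by exact_mod_cast hμτ.le
  have h1μ : 1 ≤ μ := le_trans hτ hμτ.le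
  have h1S : (1:ℕ) ∈ Finset.Icc 1 μ := Finset.mem_Icc.mpr ⟨le_refl 1, h1μ⟩
  have hα1 : 0 < α 1 := hpos 1 h1S
  -- sums
  have hsumT : ∑ i ∈ T, α i = τ * avT := by
    rw [havT]; field_simp
  have hsumS : ∑ i ∈ Finset.Icc 1 μ, α i = μ * av := by
    rw [hav]; field_simp
  -- card of complement
  have hcardS : (Finset.Icc 1 μ).card = μ := by simp
  have hcardC : ((Finset.Icc 1 μ) \ T).card = μ - τ := by
    rw [Finset.card_sdiff_of_subset hT, hcardS, hcard]
  have hcardCR : (((Finset.Icc 1 μ) \ T).card : ℝ) = (μ:ℝ) - τ := by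
    rw [hcardC]; push_cast [Nat.cast_sub hμτ.le]; ring
  -- avT ≥ α 1 > 0
  have havT_ge : α 1 ≤ avT := by
    have h : ∀ i ∈ T, α 1 ≤ α i := by
      intro i hi
      rw [← hmin]; exact Finset.inf'_le α hi
    have := Finset.sum_le_sum h
    rw [Finset.sum_const, hcard, hsumT] at this
    rw [nsmul_eq_mul] at this
    exact le_of_mul_le_mul_left this hτpos
  have havT_pos : 0 < avT := lt_of_lt_of_le hα1 havT_ge
  -- α i bounds on complement
  have hbound : ∀ i ∈ (Finset.Icc 1 μ) \ T, (α i)^2 ≤ (α μ)^2 := by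
    intro i hi
    have hi' : i ∈ Finset.Icc 1 μ := (Finset.mem_sdiff.mp hi).1
    obtain ⟨h1i, hiμ⟩ := Finset.mem_Icc.mp hi'
    have h0 : 0 < α i := hpos i hi'
    have h1 : α i ≤ α μ := hmono i μ h1i hiμ le_rfl
    nlinarith
  -- sum over complement
  have hsumC : ∑ i ∈ (Finset.Icc 1 μ) \ T, α i = μ * av - τ * avT := by
    have := Finset.sum_sdiff (f := α) hT
    rw [hsumS, hsumT] at this
    linarith
  -- expansion of squared sums
  have hexp : ∀ (U : Finset ℕ) (c : ℝ), ∑ i ∈ U, (α i - c)^2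
      = ∑ i ∈ U, (α i)^2 - 2*c*(∑ i ∈ U, α i) + U.card * c^2 := by
    intro U c
    rw [Finset.mul_sum, ← Finset.sum_sub_distrib]
    rw [show (U.card : ℝ) * c^2 = ∑ _i ∈ U, c^2 by rw [Finset.sum_const]; ring]
    rw [← Finset.sum_add_distrib]
    exact Finset.sum_congr rfl (fun i _ => by ring)
  -- key strict inequality on the complement part
  have key : ∑ i ∈ (Finset.Icc 1 μ) \ T, (α i - av)^2 + τ*(av - avT)^2
      < ((μ:ℝ) - τ) * (α μ)^2 := by
    have h2 : ∑ i ∈ (Finset.Icc 1 μ) \ T, (α i)^2 ≤ ((μ:ℝ) - τ) * (α μ)^2 := by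
      calc ∑ i ∈ (Finset.Icc 1 μ) \ T, (α i)^2
          ≤ ∑ _i ∈ (Finset.Icc 1 μ) \ T, (α μ)^2 := Finset.sum_le_sum hbound
        _ = ((μ:ℝ) - τ) * (α μ)^2 := by rw [Finset.sum_const, nsmul_eq_mul, hcardCR]
    have hav_pos : 0 < av := lt_of_lt_of_le havT_pos havle
    have hτlt : (τ:ℝ) < μ := by exact_mod_cast hμτ
    have hkey2 : (τ:ℝ) * avT^2 < μ * av^2 := by
      nlinarith [mul_pos hav_pos hav_pos, mul_pos havT_pos havT_pos,
        mul_le_mul havle havle havT_pos.le hav_pos.le]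
    rw [hexp _ av, hsumC, hcardCR]
    nlinarith [h2, hkey2]
  -- decomposition of the T-sum
  have hdecT : ∑ i ∈ T, (α i - avT)^2 = ∑ i ∈ T, (α i - av)^2 - τ*(av - avT)^2 := by
    rw [hexp T avT, hexp T av, hsumT, hcard]
    push_cast
    ring
  -- Hertling equality times μ
  have hSsum : ∑ i ∈ Finset.Icc 1 μ, (α i - av)^2 = (μ:ℝ)/12 * (α μ - α 1) := by
    have h : (μ:ℝ) * ((1/(μ:ℝ)) * ∑ i ∈ Finset.Icc 1 μ, (α i - av)^2)
        = (μ:ℝ) * ((1/12) * (α μ - α 1)) := by rw [hHertling]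
    rw [← mul_assoc, mul_one_div_cancel (ne_of_gt hμpos), one_mul] at h
    rw [h]; ring
  have hsplit : ∑ i ∈ (Finset.Icc 1 μ) \ T, (α i - av)^2 + ∑ i ∈ T, (α i - av)^2
      = ∑ i ∈ Finset.Icc 1 μ, (α i - av)^2 :=
    Finset.sum_sdiff (f := fun i => (α i - av)^2) hT
  -- max ≥ min
  have hM1 : α 1 ≤ T.sup' hTne α := by
    obtain ⟨j, hj⟩ := Finset.Nonempty.exists_mem hTne
    calc α 1 = T.inf' hTne α := hmin.symm
      _ ≤ α j := Finset.inf'_le α hj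
      _ ≤ T.sup' hTne α := Finset.le_sup' α hj
  -- conclude
  have hmain : ∑ i ∈ T, (α i - avT)^2 > (τ:ℝ)/12 * (T.sup' hTne α - α 1) := by
    linarith [hdecT, hsplit, hSsum, key, hcond,
      mul_nonneg (sub_nonneg.mpr hτle) (sub_nonneg.mpr hM1)]
  rw [gt_iff_lt, show (1/(τ:ℝ)) * ∑ i ∈ T, (α i - avT)^2
      = (∑ i ∈ T, (α i - avT)^2) / τ by ring, lt_div_iff₀ hτpos]
  linarith [hmain]
end

section
/- Let τ ≥ 2 be an integer, let α : T → ℝ be a family of real numbers indexed by a finite set T with |T| = τ, let i₀ ∈ T, and set T' := T \ {i₀}. Assume max_{i∈T'} α_i = max_{i∈T} α_i and min_{i∈T'} α_i = min_{i∈T} α_i. If (α_{i₀} − av_T)² ≥ (1/12)·(max_{i∈T} α_i − min_{i∈T} α_i), then τ·δ_T ≥ (τ−1)·δ_{T'}. -/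
/-- Inequality (4.4) in the proof of Proposition 4.1: removing an index `i₀` whose value is
far from the mean (and which realizes neither the max nor the min) satisfies
`τ·δ_T ≥ (τ−1)·δ_{T'}`. -/
theorem stmt1 {ι : Type*} [DecidableEq ι] (τ : ℕ) (hτ : 2 ≤ τ)
    (T : Finset ι) (hcard : T.card = τ) (α : ι → ℝ) (i₀ : ι) (hi₀ : i₀ ∈ T)
    (T' : Finset ι) (hT' : T' = T.erase i₀)
    (hTne : T.Nonempty) (hT'ne : T'.Nonempty)
    (hmax : T'.sup' hT'ne α = T.sup' hTne α)
    (hmin : T'.inf' hT'ne α = T.inf' hTne α)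
    (avT avT' : ℝ)
    (havT : avT = (1 / (τ : ℝ)) * ∑ i ∈ T, α i)
    (havT' : avT' = (1 / ((τ : ℝ) - 1)) * ∑ i ∈ T', α i)
    (δT δT' : ℝ)
    (hδT : δT = (1 / (τ : ℝ)) * ∑ i ∈ T, (α i - avT) ^ 2
      - (1 / 12) * (T.sup' hTne α - T.inf' hTne α))
    (hδT' : δT' = (1 / ((τ : ℝ) - 1)) * ∑ i ∈ T', (α i - avT') ^ 2
      - (1 / 12) * (T'.sup' hT'ne α - T'.inf' hT'ne α))
    (hcond : (α i₀ - avT) ^ 2 ≥ (1 / 12) * (T.sup' hTne α - T.inf' hTne α)) :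
    (τ : ℝ) * δT ≥ ((τ : ℝ) - 1) * δT' := by
  have hτR : (2:ℝ) ≤ (τ:ℝ) := by exact_mod_cast hτ
  have hτ0 : (τ:ℝ) ≠ 0 := by linarith
  have hn0 : (τ:ℝ) - 1 ≠ 0 := by linarith
  have hcard' : T'.card = τ - 1 := by
    rw [hT', Finset.card_erase_of_mem hi₀, hcard]
  have hcardR : (T'.card : ℝ) = (τ:ℝ) - 1 := by
    rw [hcard']; push_cast [Nat.cast_sub (by omega : 1 ≤ τ)]; ring
  set R := T.sup' hTne α - T.inf' hTne α with hR
  -- sums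
  set S : ℝ := ∑ i ∈ T', α i with hS
  have hSav : S = ((τ:ℝ) - 1) * avT' := by
    rw [havT']; field_simp
  have hsplit : ∑ i ∈ T, (α i - avT)^2 = ∑ i ∈ T', (α i - avT)^2 + (α i₀ - avT)^2 := by
    rw [hT', Finset.sum_erase_add T _ hi₀]
  have expand : ∀ c : ℝ, ∑ i ∈ T', (α i - c)^2
      = (∑ i ∈ T', (α i)^2) - 2*c*S + ((τ:ℝ)-1)*c^2 := by
    intro c
    have : ∑ i ∈ T', (α i - c)^2 = ∑ i ∈ T', ((α i)^2 - 2*c*(α i) + c^2) := by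
      apply Finset.sum_congr rfl; intro i _; ring
    rw [this, Finset.sum_add_distrib, Finset.sum_sub_distrib, Finset.sum_const,
      ← Finset.mul_sum, ← hS, nsmul_eq_mul, hcardR]
  have hvar : ∑ i ∈ T', (α i - avT)^2
      = ∑ i ∈ T', (α i - avT')^2 + ((τ:ℝ)-1)*(avT' - avT)^2 := by
    rw [expand avT, expand avT', hSav]; ring
  have hbias : ((τ:ℝ)-1)*(avT' - avT)^2 ≥ 0 := mul_nonneg (by linarith) (sq_nonneg _)
  have hδT2 : (τ:ℝ) * δT = ∑ i ∈ T, (α i - avT)^2 - (τ:ℝ) * ((1/12)*R) := by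
    rw [hδT]; field_simp
  have hδT'2 : ((τ:ℝ)-1) * δT' = ∑ i ∈ T', (α i - avT')^2 - ((τ:ℝ)-1) * ((1/12)*R) := by
    rw [hδT', hmax, hmin, ← hR]; field_simp
  rw [hδT2, hδT'2, hsplit, hvar]
  have hRrw : (1/12)*R ≤ (α i₀ - avT)^2 := hcond
  nlinarith [hbias, hRrw]
end

section
/- (Proposition 4.1.) Let τ ≥ 2 be an integer, let α : T → ℝ be a family of real numbers indexed by a finite set T with |T| = τ, let i₀ ∈ T, and set T' := T \ {i₀}. Assume max_{i∈T'} α_i = max_{i∈T} α_i and min_{i∈T'} α_i = min_{i∈T} α_i. If δ_T ≤ 0 and (α_{i₀} − av_T)² ≥ (1/12)·(max_{i∈T} α_i − min_{i∈T} α_i), then δ_{T'} ≤ 0. -/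
/-- Proposition 4.1: if the generalized Hertling inequality `δ_T ≤ 0` holds for `T`, the index
`i₀ ∈ T` realizes neither the maximum nor the minimum of `α` on `T`, and
`(α i₀ − av_T)² ≥ (1/12)(max_T − min_T)`, then `δ_{T'} ≤ 0` for `T' = T \ {i₀}`. -/
theorem stmt2 {ι : Type*} [DecidableEq ι] (τ : ℕ) (hτ : 2 ≤ τ)
    (T : Finset ι) (hcard : T.card = τ) (α : ι → ℝ) (i₀ : ι) (hi₀ : i₀ ∈ T)
    (T' : Finset ι) (hT' : T' = T.erase i₀)
    (hTne : T.Nonempty) (hT'ne : T'.Nonempty)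
    (hmax : T'.sup' hT'ne α = T.sup' hTne α)
    (hmin : T'.inf' hT'ne α = T.inf' hTne α)
    (avT avT' : ℝ)
    (havT : avT = (1 / (τ : ℝ)) * ∑ i ∈ T, α i)
    (havT' : avT' = (1 / ((τ : ℝ) - 1)) * ∑ i ∈ T', α i)
    (δT δT' : ℝ)
    (hδT : δT = (1 / (τ : ℝ)) * ∑ i ∈ T, (α i - avT) ^ 2
      - (1 / 12) * (T.sup' hTne α - T.inf' hTne α))
    (hδT' : δT' = (1 / ((τ : ℝ) - 1)) * ∑ i ∈ T', (α i - avT') ^ 2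
      - (1 / 12) * (T'.sup' hT'ne α - T'.inf' hT'ne α))
    (hδTneg : δT ≤ 0)
    (hcond : (α i₀ - avT) ^ 2 ≥ (1 / 12) * (T.sup' hTne α - T.inf' hTne α)) :
    δT' ≤ 0 := by
  set c : ℝ := (1 / 12) * (T.sup' hTne α - T.inf' hTne α) with hc
  have hτR : (2 : ℝ) ≤ (τ : ℝ) := by exact_mod_cast hτ
  have hτpos : (0:ℝ) < (τ : ℝ) := by linarith
  have hτ1 : (0:ℝ) < (τ : ℝ) - 1 := by linarith
  -- c ≥ 0
  have hc0 : 0 ≤ c := by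
    obtain ⟨j, hj⟩ := id hT'ne
    have h1 := Finset.inf'_le α hj
    have h2 := Finset.le_sup' (f := α) hj
    rw [hmax] at h2; rw [hmin] at h1
    rw [hc]; linarith
  -- card of T'
  have hcard' : T'.card = τ - 1 := by rw [hT', Finset.card_erase_of_mem hi₀, hcard]
  have hcardR : ((T'.card : ℝ)) = (τ : ℝ) - 1 := by
    rw [hcard']
    have : 1 ≤ τ := by omega
    push_cast [this]; ring
  -- sum splittings
  set s1 : ℝ := ∑ i ∈ T', α i with hs1
  set q1 : ℝ := ∑ i ∈ T', α i ^ 2 with hq1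
  have hsum : ∑ i ∈ T, α i = α i₀ + s1 := by
    rw [hs1, hT', Finset.add_sum_erase T α hi₀]
  have hqsum : ∑ i ∈ T, α i ^ 2 = α i₀ ^ 2 + q1 := by
    rw [hq1, hT', Finset.add_sum_erase T (fun i => α i ^ 2) hi₀]
  -- expand variance sums
  have hexp : ∀ (S : Finset ι) (m : ℝ), ∑ i ∈ S, (α i - m) ^ 2
      = (∑ i ∈ S, α i ^ 2) - 2 * m * (∑ i ∈ S, α i) + (S.card : ℝ) * m ^ 2 := by
    intro S m
    have h : ∀ i ∈ S, (α i - m) ^ 2 = α i ^ 2 - 2 * m * α i + m ^ 2 :=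
      fun i _ => by ring
    rw [Finset.sum_congr rfl h, Finset.sum_add_distrib, Finset.sum_sub_distrib,
      Finset.sum_const, nsmul_eq_mul, ← Finset.mul_sum]
  have hT_exp := hexp T avT
  have hT'_exp := hexp T' avT'
  rw [hcard] at hT_exp
  rw [hcardR] at hT'_exp
  -- averages
  have havT2 : (τ : ℝ) * avT = α i₀ + s1 := by
    rw [havT, hsum]; field_simp
  have havT'2 : ((τ : ℝ) - 1) * avT' = s1 := by
    rw [havT']; field_simp
  have hs : s1 = (τ : ℝ) * avT - α i₀ := by linarith
  -- the inequality for T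
  rw [hδT, hT_exp, hqsum, hsum] at hδTneg
  have h1 : α i₀ ^ 2 + q1 - 2 * avT * (α i₀ + s1) + (τ:ℝ) * avT ^ 2 ≤ (τ:ℝ) * c := by
    rw [div_mul_eq_mul_div, sub_nonpos, div_le_iff₀ hτpos] at hδTneg
    linarith [hδTneg]
  rw [hs] at h1
  have h1' : q1 ≤ (τ:ℝ) * c + (τ:ℝ) * avT ^ 2 - α i₀ ^ 2 := by nlinarith [h1]
  -- key quadratic inequality
  have key2 : ((τ:ℝ) - 1) * q1 - s1 ^ 2 ≤ ((τ:ℝ) - 1) ^ 2 * c := by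
    rw [hs]
    have hA := mul_le_mul_of_nonneg_left h1' (le_of_lt hτ1)
    have hB := mul_le_mul_of_nonneg_left hcond (le_of_lt hτpos)
    ring_nf at hA hB ⊢
    linarith [hA, hB, hc0]
  -- rewrite the goal
  rw [hδT', hT'_exp, hmax, hmin, ← hc]
  have hE : q1 - 2 * avT' * s1 + ((τ:ℝ) - 1) * avT' ^ 2 = q1 - s1 ^ 2 / ((τ:ℝ) - 1) := by
    rw [havT']; field_simp; ring
  have key : q1 - 2 * avT' * s1 + ((τ:ℝ) - 1) * avT' ^ 2 ≤ ((τ:ℝ) - 1) * c := by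
    rw [hE]
    calc q1 - s1 ^ 2 / ((τ:ℝ) - 1) = (((τ:ℝ) - 1) * q1 - s1 ^ 2) / ((τ:ℝ) - 1) := by
          field_simp
      _ ≤ (((τ:ℝ) - 1) ^ 2 * c) / ((τ:ℝ) - 1) := by gcongr
      _ = ((τ:ℝ) - 1) * c := by field_simp
  rw [div_mul_eq_mul_div, sub_nonpos, div_le_iff₀ hτ1]
  linarith [key]
end

section
/- (First step in the proof of Theorem 3.1.) Let μ ≥ 1 be an integer, n a real number, and α₁ ≤ α₂ ≤ … ≤ α_μ real numbers satisfying the symmetry α_i + α_{μ+1−i} = n for all i ∈ {1,…,μ} and α_μ − α₁ ≤ 2. Let T ⊆ {1,…,μ} be nonempty and suppose that every i ∈ {1,…,μ} \ T satisfies α_i ≥ α₁ + 1. Then av_T := (1/|T|)·Σ_{i∈T} α_i ≤ n/2 = (1/μ)·Σ_{i=1}^{μ} α_i. -/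
/-!
Pairing `i` with `μ + 1 - i` shows that the mean of all the `α i` is `n / 2`. By symmetry
`α 1 + α μ = n`, so `α μ - α 1 ≤ 2` gives `α 1 ≥ n / 2 - 1`; hence every index missing from
`T` carries a value `≥ n / 2`. Removing values that are at least the overall mean cannot raise the
mean of what remains.
-/

open Finset

theorem Finset.sum_Icc_one_reflect {M : Type*} [AddCommMonoid M] (f : ℕ → M) (μ : ℕ) :
    ∑ i ∈ Icc 1 μ, f (μ + 1 - i) = ∑ i ∈ Icc 1 μ, f i := by
  have h := sum_Ico_reflect f 1 (n := μ + 1) (m := μ + 1) (by omega)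
  rwa [show μ + 1 + 1 - (μ + 1) = 1 by omega, show μ + 1 + 1 - 1 = μ + 1 by omega,
    Ico_add_one_right_eq_Icc] at h

theorem Finset.sum_Icc_one_eq_of_add_reflect_eq {K : Type*} [Field K] [CharZero K] {μ : ℕ}
    {n : K} {α : ℕ → K} (hsym : ∀ i ∈ Icc 1 μ, α i + α (μ + 1 - i) = n) :
    ∑ i ∈ Icc 1 μ, α i = μ * (n / 2) := by
  have h := sum_congr rfl hsym
  rw [sum_add_distrib, sum_Icc_one_reflect, sum_const, Nat.card_Icc, nsmul_eq_mul] at h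
  push_cast at h
  linear_combination h / 2

theorem Finset.sum_le_card_mul_of_le_on_sdiff {ι K : Type*} [DecidableEq ι] [Field K]
    [LinearOrder K] [IsStrictOrderedRing K] {s t : Finset ι} {f : ι → K} {c : K}
    (hts : t ⊆ s) (hsum : ∑ i ∈ s, f i = #s * c)
    (hle : ∀ i ∈ s \ t, c ≤ f i) :
    ∑ i ∈ t, f i ≤ #t * c := by
  have hsdiff : (#(s \ t) : K) * c ≤ ∑ i ∈ s \ t, f i := by
    simpa using card_nsmul_le_sum (s \ t) f c hle
  have hcard : (#(s \ t) : K) = #s - #t := by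
    rw [card_sdiff_of_subset hts, Nat.cast_sub (card_le_card hts)]
  have hsplit := sum_sdiff hts (f := f)
  rw [hcard] at hsdiff
  linarith

theorem stmt5_general (μ : ℕ) (n : ℝ) (α : ℕ → ℝ)
    (hsym : ∀ i ∈ Finset.Icc 1 μ, α i + α (μ + 1 - i) = n)
    (hwidth : α μ - α 1 ≤ 2)
    (T : Finset ℕ) (hT : T ⊆ Finset.Icc 1 μ) (hTne : T.Nonempty)
    (hmiss : ∀ i ∈ Finset.Icc 1 μ, i ∉ T → α i ≥ α 1 + 1)
    (avT : ℝ) (havT : avT = (1 / (T.card : ℝ)) * ∑ i ∈ T, α i) :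
    avT ≤ n / 2 ∧ n / 2 = (1 / (μ : ℝ)) * ∑ i ∈ Finset.Icc 1 μ, α i := by
  obtain ⟨j, hj⟩ := hTne
  obtain ⟨hj1, hjμ⟩ := mem_Icc.mp (hT hj)
  have hμ : 1 ≤ μ := hj1.trans hjμ
  have htotal := sum_Icc_one_eq_of_add_reflect_eq hsym
  have hends : α 1 + α μ = n := by simpa using hsym 1 (mem_Icc.mpr ⟨le_rfl, hμ⟩)
  have hmiss_ge_half : ∀ i ∈ Icc 1 μ \ T, n / 2 ≤ α i := fun i hi => by
    have := hmiss i (mem_sdiff.mp hi).1 (mem_sdiff.mp hi).2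
    linarith
  have hTsum := sum_le_card_mul_of_le_on_sdiff hT (by rwa [Nat.card_Icc, add_tsub_cancel_right])
    hmiss_ge_half
  have hTpos : (0 : ℝ) < #T := by exact_mod_cast card_pos.mpr ⟨j, hj⟩
  have hμpos : (0 : ℝ) < μ := by exact_mod_cast hμ
  constructor
  · rw [havT, one_div, inv_mul_le_iff₀ hTpos]
    exact hTsum
  · rw [htotal]
    field_simp

/-- First step in the proof of Theorem 3.1: given the symmetry `α i + α (μ+1−i) = n` of the
spectral numbers and `α μ − α 1 ≤ 2`, if every index outside `T` has `α i ≥ α 1 + 1`, then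
the mean of `α` over `T` is at most `n/2`, which equals the mean over all of `{1,…,μ}`. -/
theorem stmt5 (μ : ℕ) (hμ : 1 ≤ μ) (n : ℝ) (α : ℕ → ℝ)
    (hmono : ∀ i j, 1 ≤ i → i ≤ j → j ≤ μ → α i ≤ α j)
    (hsym : ∀ i ∈ Finset.Icc 1 μ, α i + α (μ + 1 - i) = n)
    (hwidth : α μ - α 1 ≤ 2)
    (T : Finset ℕ) (hT : T ⊆ Finset.Icc 1 μ) (hTne : T.Nonempty)
    (hmiss : ∀ i ∈ Finset.Icc 1 μ, i ∉ T → α i ≥ α 1 + 1)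
    (avT : ℝ) (havT : avT = (1 / (T.card : ℝ)) * ∑ i ∈ T, α i) :
    avT ≤ n / 2 ∧ n / 2 = (1 / (μ : ℝ)) * ∑ i ∈ Finset.Icc 1 μ, α i :=
  stmt5_general μ n α hsym hwidth T hT hTne hmiss avT havT
end

section
/- (Section 5, ordinary m-ple point case.) Let m ≥ 2 and n ≥ 1 be integers, set μ := (m−1)^n, and let τ < μ be a nonnegative integer. Let α₁ ≤ … ≤ α_μ be positive real numbers with α_μ ≤ n, satisfying Hertling's equality (1/μ)·Σ_{i=1}^{μ}(α_i − av)² = (1/12)(α_μ − α₁) where av = (1/μ)Σα_i. Let T ⊆ {1,…,μ} with |T| = τ ≥ 1, min_{i∈T} α_i = α₁, av_T := (1/τ)·Σ_{i∈T} α_i ≤ av, and α_μ − max_{i∈T} α_i ≥ 1/m. If (m−1)^n ≥ 12·m·n²·(μ − τ), then (1/τ)·Σ_{i∈T}(α_i − av_T)² > (1/12)·(max_{i∈T} α_i − α₁); that is, the generalized Hertling inequality fails for T. -/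
/-- Shifting the center of a sum of squares. -/
lemma shift_sum (U : Finset ℕ) (f : ℕ → ℝ) (a b : ℝ) :
    ∑ i ∈ U, (f i - b) ^ 2
      = ∑ i ∈ U, (f i - a) ^ 2
        + (a - b) * (2 * ∑ i ∈ U, f i - (U.card : ℝ) * (a + b)) := by
  have h : ∀ i ∈ U, (f i - b) ^ 2
      = (f i - a) ^ 2 + ((a - b) * 2 * f i - (a - b) * (a + b)) := by
    intro i _; ring
  have e1 : ∑ i ∈ U, ((a - b) * 2 * f i - (a - b) * (a + b))
      = (a - b) * (2 * ∑ i ∈ U, f i - (U.card : ℝ) * (a + b)) := by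
    rw [Finset.sum_sub_distrib, ← Finset.mul_sum, Finset.sum_const, nsmul_eq_mul]
    ring
  rw [Finset.sum_congr rfl h, Finset.sum_add_distrib, e1]

/-- Section 5, ordinary `m`-ple point case: with `μ = (m−1)^n`, positive spectral numbers
bounded by `n` satisfying Hertling's equality, `min_T α = α 1`, `av_T ≤ av` and
`α μ − max_T α ≥ 1/m`, the generalized Hertling inequality fails for `T` as soon as
`(m−1)^n ≥ 12·m·n²·(μ−τ)`. -/
theorem stmt6 (m n : ℕ) (hm : 2 ≤ m) (hn : 1 ≤ n)
    (μ τ : ℕ) (hμ : μ = (m - 1) ^ n) (hτ : 1 ≤ τ) (hτμ : τ < μ)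
    (α : ℕ → ℝ)
    (hpos : ∀ i ∈ Finset.Icc 1 μ, 0 < α i)
    (hmono : ∀ i j, 1 ≤ i → i ≤ j → j ≤ μ → α i ≤ α j)
    (hbound : α μ ≤ n)
    (av : ℝ) (hav : av = (1 / (μ : ℝ)) * ∑ i ∈ Finset.Icc 1 μ, α i)
    (hHertling : (1 / (μ : ℝ)) * ∑ i ∈ Finset.Icc 1 μ, (α i - av) ^ 2
      = (1 / 12) * (α μ - α 1))
    (T : Finset ℕ) (hT : T ⊆ Finset.Icc 1 μ) (hcard : T.card = τ) (hTne : T.Nonempty)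
    (hmin : T.inf' hTne α = α 1)
    (avT : ℝ) (havT : avT = (1 / (τ : ℝ)) * ∑ i ∈ T, α i) (havle : avT ≤ av)
    (hgap : α μ - T.sup' hTne α ≥ 1 / (m : ℝ))
    (hcond : ((m : ℝ) - 1) ^ n ≥ 12 * (m : ℝ) * (n : ℝ) ^ 2 * ((μ : ℝ) - (τ : ℝ))) :
    (1 / (τ : ℝ)) * ∑ i ∈ T, (α i - avT) ^ 2 > (1 / 12) * (T.sup' hTne α - α 1) := by
  set S : Finset ℕ := Finset.Icc 1 μ with hS
  set M : ℝ := T.sup' hTne α with hM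
  -- basic positivity and cast facts
  have hτR : (0 : ℝ) < τ := by exact_mod_cast Nat.lt_of_lt_of_le Nat.zero_lt_one hτ
  have hμpos : 0 < μ := Nat.lt_of_le_of_lt (Nat.zero_le τ) hτμ
  have hμR : (0 : ℝ) < μ := by exact_mod_cast hμpos
  have hmR : (2 : ℝ) ≤ m := by exact_mod_cast hm
  have hmpos : (0 : ℝ) < m := by linarith
  have hτμR : (τ : ℝ) < μ := by exact_mod_cast hτμ
  have hScard : S.card = μ := by simp [hS]
  -- the condition in terms of μ
  have h1m : (1 : ℕ) ≤ m := by omega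
  have hμcast : ((m : ℝ) - 1) ^ n = (μ : ℝ) := by
    rw [hμ, Nat.cast_pow, Nat.cast_sub h1m, Nat.cast_one]
  have hcond' : (μ : ℝ) ≥ 12 * (m : ℝ) * (n : ℝ) ^ 2 * ((μ : ℝ) - (τ : ℝ)) := by
    linarith [hcond, hμcast]
  -- sums
  have hsumT : ∑ i ∈ T, α i = (τ : ℝ) * avT := by
    rw [havT]; field_simp
  have hsumS : ∑ i ∈ S, α i = (μ : ℝ) * av := by
    rw [hav]; field_simp
  have hsplitα : ∑ i ∈ S \ T, α i + ∑ i ∈ T, α i = ∑ i ∈ S, α i :=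
    Finset.sum_sdiff hT
  have hsumC : ∑ i ∈ S \ T, α i = (μ : ℝ) * av - (τ : ℝ) * avT := by
    rw [hsumT, hsumS] at hsplitα; linarith
  have hcardC : (S \ T).card = μ - τ := by
    rw [Finset.card_sdiff_of_subset hT, hScard, hcard]
  have hcardCR : ((S \ T).card : ℝ) = (μ : ℝ) - τ := by
    rw [hcardC, Nat.cast_sub hτμ.le]
  have hCne : (S \ T).Nonempty := by
    rw [← Finset.card_pos, hcardC]; omega
  -- every α i with i ∈ S lies in (0, n]
  have hmemS : ∀ i ∈ S, 1 ≤ i ∧ i ≤ μ := by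
    intro i hi; exact Finset.mem_Icc.mp hi
  have hαn : ∀ i ∈ S, α i ≤ n := by
    intro i hi
    exact le_trans (hmono i μ (hmemS i hi).1 (hmemS i hi).2 le_rfl) hbound
  -- avT ∈ (0, n]
  have havTpos : 0 < avT := by
    have hsp : 0 < ∑ i ∈ T, α i :=
      Finset.sum_pos (fun i hi => hpos i (hT hi)) hTne
    rw [hsumT] at hsp
    nlinarith
  have havn : av ≤ n := by
    have hsle : ∑ i ∈ S, α i ≤ ∑ _i ∈ S, (n : ℝ) :=
      Finset.sum_le_sum hαn
    rw [hsumS, Finset.sum_const, nsmul_eq_mul, hScard] at hsle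
    exact le_of_mul_le_mul_left (by linarith) hμR
  have havTn : avT ≤ n := le_trans havle havn
  -- the sum over the complement is < (μ - τ) n²
  have hB : ∑ i ∈ S \ T, (α i - avT) ^ 2 < ((μ : ℝ) - τ) * (n : ℝ) ^ 2 := by
    have h1 : ∑ i ∈ S \ T, (α i - avT) ^ 2 < ∑ _i ∈ S \ T, (n : ℝ) ^ 2 := by
      apply Finset.sum_lt_sum_of_nonempty hCne
      intro i hi
      have hiS : i ∈ S := (Finset.mem_sdiff.mp hi).1
      have h2 : 0 < α i := hpos i hiS
      have h3 : α i ≤ n := hαn i hiS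
      apply sq_lt_sq' <;> linarith
    rwa [Finset.sum_const, nsmul_eq_mul, hcardCR] at h1
  -- Hertling's equality, cleared of denominators
  have eS : ∑ i ∈ T, (α i - av) ^ 2 + ∑ i ∈ S \ T, (α i - av) ^ 2
      = (μ : ℝ) / 12 * (α μ - α 1) := by
    have hsplit2 : ∑ i ∈ S \ T, (α i - av) ^ 2 + ∑ i ∈ T, (α i - av) ^ 2
        = ∑ i ∈ S, (α i - av) ^ 2 := Finset.sum_sdiff hT
    have h12 : ∑ i ∈ S, (α i - av) ^ 2 = (μ : ℝ) / 12 * (α μ - α 1) := by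
      have h := hHertling
      field_simp at h
      linarith
    linarith
  -- key identity:
  -- ∑_T (α-avT)² = (μ/12)(αμ-α1) + μ (av-avT)² - ∑_{S∖T} (α-avT)²
  have eT := shift_sum T α av avT
  rw [hcard, hsumT] at eT
  have eC := shift_sum (S \ T) α av avT
  rw [hcardCR, hsumC] at eC
  have ident : ∑ i ∈ T, (α i - avT) ^ 2
      = (μ : ℝ) / 12 * (α μ - α 1) + (μ : ℝ) * (av - avT) ^ 2
        - ∑ i ∈ S \ T, (α i - avT) ^ 2 := by
    linear_combination eT + eC + eS
  -- α 1 ≤ M and α μ - α 1 ≥ 1/m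
  have hα1M : α 1 ≤ M := by
    obtain ⟨j, hj⟩ := id hTne
    calc α 1 = T.inf' hTne α := hmin.symm
      _ ≤ α j := Finset.inf'_le α hj
      _ ≤ M := Finset.le_sup' α hj
  have hMle : M ≤ α μ - 1 / m := by linarith
  have hD : α μ - α 1 ≥ 1 / m := by linarith
  -- (μ-τ) n² ≤ μ/(12 m)
  have s3 : ((μ : ℝ) - τ) * (n : ℝ) ^ 2 ≤ (μ : ℝ) * (1 / (m : ℝ)) / 12 := by
    rw [show (μ : ℝ) * (1 / (m : ℝ)) / 12 = (μ : ℝ) / (12 * m) from by ring,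
      le_div_iff₀ (by positivity : (0:ℝ) < 12 * m)]
    calc ((μ : ℝ) - τ) * (n : ℝ) ^ 2 * (12 * m)
        = 12 * (m : ℝ) * (n : ℝ) ^ 2 * ((μ : ℝ) - (τ : ℝ)) := by ring
      _ ≤ (μ : ℝ) := hcond'
  -- assemble
  have hμc2 : (0 : ℝ) ≤ (μ : ℝ) * (av - avT) ^ 2 := by positivity
  have s1 : (τ : ℝ) * (M - α 1) ≤ (τ : ℝ) * (α μ - α 1 - 1 / m) :=
    mul_le_mul_of_nonneg_left (by linarith) (le_of_lt hτR)
  have s2 : ((μ : ℝ) - τ) * (1 / m) ≤ ((μ : ℝ) - τ) * (α μ - α 1) :=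
    mul_le_mul_of_nonneg_left hD (by linarith)
  have hfin : (1 / 12 : ℝ) * (M - α 1) * τ < ∑ i ∈ T, (α i - avT) ^ 2 := by
    rw [ident]
    linarith [hB, s3, s1, s2, hμc2]
  calc (1 / 12 : ℝ) * (M - α 1)
      = (1 / 12 : ℝ) * (M - α 1) * τ * (1 / τ) := by field_simp
    _ < (1 / (τ : ℝ)) * ∑ i ∈ T, (α i - avT) ^ 2 := by
        rw [mul_comm]
        exact mul_lt_mul_of_pos_left hfin (by positivity)
end

section
/- (Section 9, first displayed identity; case where the unique missing spectral number is the maximal one.) Let c be a positive integer, set τ := c + 14, and let T be the finite family of τ rational numbers consisting of 5/12, 11/12, 13/12 together with 1/2 + k/(c+12) for k = 1, 2, …, c+11. Then min T = 5/12, max T = 3/2 − 1/(c+12), and with av_T := (1/τ)·Σ_{x∈T} x one has Σ_{x∈T}(x − av_T)² − (τ/12)·(max T − min T) = −(c³ + 37c² + 455c + 1764)/(144c² + 3744c + 24192). In particular this quantity is negative for every positive integer c, so δ_T < 0. -/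
/-!
The mean of `T` is `(c + 161/12)/(c + 14)`, and the arithmetic progression `1/2 + k/(c+12)`
contributes the Faulhaber sums of `k` and `k²` to the first two moments. Writing
`Σ (x - a)² = Σ x² - 2a Σ x + τ a²` turns the deviation into a rational function of `c`,
identified by clearing denominators; it is negative because its numerator and denominator
have positive coefficients.
-/

open Finset

theorem Multiset.sum_map_sub_sq (s : Multiset ℝ) (a : ℝ) :
    (s.map fun x => (x - a) ^ 2).sum = (s.map (· ^ 2)).sum - 2 * a * s.sum + s.card * a ^ 2 := by
  induction s using Multiset.induction_on with
  | empty => simp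
  | cons x s ih =>
    simp only [Multiset.map_cons, Multiset.sum_cons, Multiset.card_cons, ih]
    push_cast
    ring

theorem sum_Icc_one_add_div (a d : ℝ) (n : ℕ) :
    ∑ k ∈ Icc 1 n, (a + k / d) = n * a + n * (n + 1) / (2 * d) := by
  induction n with
  | zero => simp
  | succ n ih => rw [sum_Icc_succ_top (by omega), ih]; push_cast; ring

theorem sum_Icc_one_add_div_sq (a d : ℝ) (n : ℕ) :
    ∑ k ∈ Icc 1 n, (a + k / d) ^ 2
      = n * a ^ 2 + a * n * (n + 1) / d + n * (n + 1) * (2 * n + 1) / (6 * d ^ 2) := by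
  induction n with
  | zero => simp
  | succ n ih => rw [sum_Icc_succ_top (by omega), ih]; push_cast; ring

/-- The spectrum of the curve with Puiseux pairs `(3,2), (c,2)`, with `19/12` removed. -/
noncomputable def spectrumFamily (c : ℕ) : Multiset ℝ :=
  ({5/12, 11/12, 13/12} : Multiset ℝ)
    + Multiset.map (fun k : ℕ => 1/2 + (k : ℝ) / ((c : ℝ) + 12)) (Finset.Icc 1 (c + 11)).val

namespace spectrumFamily

variable (c : ℕ)

theorem card : (spectrumFamily c).card = c + 14 := by
  simp [spectrumFamily]

theorem sum : (spectrumFamily c).sum = c + 161 / 12 := by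
  have hd : (c : ℝ) + 12 ≠ 0 := by positivity
  simp only [spectrumFamily, Multiset.sum_add, Multiset.insert_eq_cons, Multiset.sum_cons,
    Multiset.sum_singleton, sum_map_val, sum_Icc_one_add_div]
  push_cast
  field_simp
  ring

theorem sum_sq : ((spectrumFamily c).map (· ^ 2)).sum
    = 35 / 16 + 3 * ((c : ℝ) + 11) / 4 + (c + 11) * (2 * c + 23) / (6 * (c + 12)) := by
  have hd : (c : ℝ) + 12 ≠ 0 := by positivity
  simp only [spectrumFamily, Multiset.map_add, Multiset.sum_add, Multiset.map_map,
    Multiset.insert_eq_cons, Multiset.map_cons, Multiset.map_singleton, Multiset.sum_cons,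
    Multiset.sum_singleton, Function.comp_def, sum_map_val, sum_Icc_one_add_div_sq]
  push_cast
  field_simp
  ring


theorem mem_iff {x : ℝ} : x ∈ spectrumFamily c ↔
    x = 5/12 ∨ x = 11/12 ∨ x = 13/12 ∨ ∃ k ∈ Icc 1 (c + 11), 1/2 + (k : ℝ) / (c + 12) = x := by
  simp [spectrumFamily]

theorem five_twelfths_mem : (5/12 : ℝ) ∈ spectrumFamily c := by
  simp [mem_iff]

theorem max_mem : 3/2 - 1/((c : ℝ) + 12) ∈ spectrumFamily c := by
  refine (mem_iff c).2 (.inr <| .inr <| .inr ⟨c + 11, by simp, ?_⟩)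
  field_simp
  push_cast
  ring

theorem five_twelfths_le {x : ℝ} (hx : x ∈ spectrumFamily c) : 5/12 ≤ x := by
  obtain rfl | rfl | rfl | ⟨k, -, rfl⟩ := (mem_iff c).1 hx
  · norm_num
  · norm_num
  · norm_num
  · have : 0 ≤ (k : ℝ) / (c + 12) := by positivity
    linarith

theorem le_max {x : ℝ} (hx : x ∈ spectrumFamily c) : x ≤ 3/2 - 1/((c : ℝ) + 12) := by
  have hd : (0 : ℝ) < c + 12 := by positivity
  have h12 : 1 / ((c : ℝ) + 12) ≤ 1 / 12 := by gcongr; linarith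
  obtain rfl | rfl | rfl | ⟨k, hk, rfl⟩ := (mem_iff c).1 hx
  · linarith
  · linarith
  · linarith
  · have hk : (k : ℝ) ≤ c + 11 := by exact_mod_cast (mem_Icc.1 hk).2
    have : (k : ℝ) / (c + 12) ≤ 1 - 1 / (c + 12) := by
      rw [div_le_iff₀ hd]
      field_simp
      linarith
    linarith

theorem deviation_eq {a : ℝ} (ha : a = (spectrumFamily c).sum / (c + 14)) :
    ((spectrumFamily c).map fun x => (x - a) ^ 2).sum
        - (((c : ℝ) + 14) / 12) * ((3/2 - 1/((c : ℝ) + 12)) - 5/12)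
      = -((c : ℝ) ^ 3 + 37 * (c : ℝ) ^ 2 + 455 * (c : ℝ) + 1764)
          / (144 * (c : ℝ) ^ 2 + 3744 * (c : ℝ) + 24192) := by
  rw [Multiset.sum_map_sub_sq, sum_sq, card, ha, sum]
  push_cast
  field_simp
  ring

end spectrumFamily

theorem stmt8_general (c : ℕ) (τ : ℕ) (hτ : τ = c + 14)
    (T : Multiset ℝ)
    (hT : T = ({5/12, 11/12, 13/12} : Multiset ℝ)
      + Multiset.map (fun k : ℕ => 1/2 + (k : ℝ) / ((c : ℝ) + 12)) (Finset.Icc 1 (c + 11)).val)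
    (avT : ℝ) (havT : avT = (1 / (τ : ℝ)) * T.sum) :
    T.card = τ ∧
    (5/12 : ℝ) ∈ T ∧ (∀ x ∈ T, (5/12 : ℝ) ≤ x) ∧
    (3/2 - 1/((c : ℝ) + 12)) ∈ T ∧ (∀ x ∈ T, x ≤ 3/2 - 1/((c : ℝ) + 12)) ∧
    (Multiset.map (fun x => (x - avT) ^ 2) T).sum
        - ((τ : ℝ) / 12) * ((3/2 - 1/((c : ℝ) + 12)) - 5/12)
      = -((c : ℝ) ^ 3 + 37 * (c : ℝ) ^ 2 + 455 * (c : ℝ) + 1764)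
          / (144 * (c : ℝ) ^ 2 + 3744 * (c : ℝ) + 24192) ∧
    (Multiset.map (fun x => (x - avT) ^ 2) T).sum
        - ((τ : ℝ) / 12) * ((3/2 - 1/((c : ℝ) + 12)) - 5/12) < 0 := by
  rw [← spectrumFamily] at hT
  subst hT
  have hτℝ : (τ : ℝ) = c + 14 := by rw [hτ]; push_cast; ring
  have hdeviation := spectrumFamily.deviation_eq c (a := avT) (by rw [havT, hτℝ]; ring)
  rw [hτℝ]
  refine ⟨by rw [spectrumFamily.card, hτ], spectrumFamily.five_twelfths_mem c,
    fun _ => spectrumFamily.five_twelfths_le c, spectrumFamily.max_mem c,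
    fun _ => spectrumFamily.le_max c, hdeviation, ?_⟩
  rw [hdeviation, neg_div, neg_lt_zero]
  positivity

/-- Section 9, first displayed identity: for the family `T` consisting of
`5/12, 11/12, 13/12` together with `1/2 + k/(c+12)` for `k = 1,…,c+11` (so `τ = c+14`
elements), the minimum is `5/12`, the maximum is `3/2 − 1/(c+12)`, and
`Σ (x − av_T)² − (τ/12)(max − min) = −(c³+37c²+455c+1764)/(144c²+3744c+24192) < 0`. -/
theorem stmt8 (c : ℕ) (hc : 0 < c) (τ : ℕ) (hτ : τ = c + 14)
    (T : Multiset ℝ)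
    (hT : T = ({5/12, 11/12, 13/12} : Multiset ℝ)
      + Multiset.map (fun k : ℕ => 1/2 + (k : ℝ) / ((c : ℝ) + 12)) (Finset.Icc 1 (c + 11)).val)
    (avT : ℝ) (havT : avT = (1 / (τ : ℝ)) * T.sum) :
    T.card = τ ∧
    (5/12 : ℝ) ∈ T ∧ (∀ x ∈ T, (5/12 : ℝ) ≤ x) ∧
    (3/2 - 1/((c : ℝ) + 12)) ∈ T ∧ (∀ x ∈ T, x ≤ 3/2 - 1/((c : ℝ) + 12)) ∧
    (Multiset.map (fun x => (x - avT) ^ 2) T).sum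
        - ((τ : ℝ) / 12) * ((3/2 - 1/((c : ℝ) + 12)) - 5/12)
      = -((c : ℝ) ^ 3 + 37 * (c : ℝ) ^ 2 + 455 * (c : ℝ) + 1764)
          / (144 * (c : ℝ) ^ 2 + 3744 * (c : ℝ) + 24192) ∧
    (Multiset.map (fun x => (x - avT) ^ 2) T).sum
        - ((τ : ℝ) / 12) * ((3/2 - 1/((c : ℝ) + 12)) - 5/12) < 0 :=
  stmt8_general c τ hτ T hT avT havT
end

section
/- (Section 9, second displayed identity; consecutive case C_f = {μ−1, μ}.) Let c be a positive integer, set τ := c + 13, and let T be the finite family of τ rational numbers consisting of 5/12, 11/12, 13/12 together with 1/2 + k/(c+12) for k = 1, 2, …, c+10. Then min T = 5/12, max T = 3/2 − 2/(c+12), and with av_T := (1/τ)·Σ_{x∈T} x one has Σ_{x∈T}(x − av_T)² − (τ/12)·(max T − min T) = −(c⁴ + 59c³ + 1247c² + 10992c + 33840)/(144c³ + 5328c² + 65664c + 269568). In particular this quantity is negative for every positive integer c, so δ_T < 0. -/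
lemma sum_icc_id' (n : ℕ) : ∑ k ∈ Finset.Icc 1 n, (k:ℝ) = n*(n+1)/2 := by
  induction n with
  | zero => simp
  | succ m ih =>
    rw [Finset.sum_Icc_succ_top (by omega), ih]
    push_cast; ring

lemma sum_icc_sq' (n : ℕ) : ∑ k ∈ Finset.Icc 1 n, (k:ℝ)^2 = n*(n+1)*(2*n+1)/6 := by
  induction n with
  | zero => simp
  | succ m ih =>
    rw [Finset.sum_Icc_succ_top (by omega), ih]
    push_cast; ring

/-- Section 9, second displayed identity (consecutive case): for the family `T` consisting of
`5/12, 11/12, 13/12` together with `1/2 + k/(c+12)` for `k = 1,…,c+10` (so `τ = c+13`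
elements), the minimum is `5/12`, the maximum is `3/2 − 2/(c+12)`, and
`Σ (x − av_T)² − (τ/12)(max − min)
  = −(c⁴+59c³+1247c²+10992c+33840)/(144c³+5328c²+65664c+269568) < 0`. -/
theorem stmt9 (c : ℕ) (hc : 0 < c) (τ : ℕ) (hτ : τ = c + 13)
    (T : Multiset ℝ)
    (hT : T = ({5/12, 11/12, 13/12} : Multiset ℝ)
      + Multiset.map (fun k : ℕ => 1/2 + (k : ℝ) / ((c : ℝ) + 12)) (Finset.Icc 1 (c + 10)).val)
    (avT : ℝ) (havT : avT = (1 / (τ : ℝ)) * T.sum) :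
    T.card = τ ∧
    (5/12 : ℝ) ∈ T ∧ (∀ x ∈ T, (5/12 : ℝ) ≤ x) ∧
    (3/2 - 2/((c : ℝ) + 12)) ∈ T ∧ (∀ x ∈ T, x ≤ 3/2 - 2/((c : ℝ) + 12)) ∧
    (Multiset.map (fun x => (x - avT) ^ 2) T).sum
        - ((τ : ℝ) / 12) * ((3/2 - 2/((c : ℝ) + 12)) - 5/12)
      = -((c : ℝ) ^ 4 + 59 * (c : ℝ) ^ 3 + 1247 * (c : ℝ) ^ 2 + 10992 * (c : ℝ) + 33840)
          / (144 * (c : ℝ) ^ 3 + 5328 * (c : ℝ) ^ 2 + 65664 * (c : ℝ) + 269568) ∧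
    (Multiset.map (fun x => (x - avT) ^ 2) T).sum
        - ((τ : ℝ) / 12) * ((3/2 - 2/((c : ℝ) + 12)) - 5/12) < 0 := by
  have hdpos : (0:ℝ) < (c:ℝ) + 12 := by positivity
  have hd : (c:ℝ) + 12 ≠ 0 := ne_of_gt hdpos
  have hc1 : (1:ℝ) ≤ (c:ℝ) := by exact_mod_cast hc
  have hmax : 1/2 + ((c:ℝ)+10)/((c:ℝ)+12) = 3/2 - 2/((c:ℝ)+12) := by
    field_simp; ring
  -- card
  have hcard : T.card = τ := by
    rw [hT, hτ]
    simp [Multiset.insert_eq_cons, Nat.card_Icc]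
  -- membership of min
  have hmin_mem : (5/12 : ℝ) ∈ T := by
    rw [hT]; simp [Multiset.insert_eq_cons]
  -- membership of max
  have hmax_mem : (3/2 - 2/((c : ℝ) + 12)) ∈ T := by
    rw [hT, ← hmax]
    refine Multiset.mem_add.mpr (Or.inr ?_)
    refine Multiset.mem_map.mpr ⟨c + 10, ?_, by push_cast; ring⟩
    rw [Finset.mem_val, Finset.mem_Icc]; omega
  -- lower bound
  have hlow : ∀ x ∈ T, (5/12 : ℝ) ≤ x := by
    intro x hx
    rw [hT] at hx
    rcases Multiset.mem_add.mp hx with h | h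
    · simp only [Multiset.insert_eq_cons, Multiset.mem_cons, Multiset.mem_singleton] at h
      rcases h with rfl | rfl | rfl <;> norm_num
    · obtain ⟨k, _, rfl⟩ := Multiset.mem_map.mp h
      have : (0:ℝ) ≤ (k:ℝ)/((c:ℝ)+12) := by positivity
      linarith
  -- upper bound
  have h24 : 2/((c:ℝ)+12) ≤ 5/12 := by
    rw [div_le_iff₀ hdpos]; nlinarith
  have hup : ∀ x ∈ T, x ≤ 3/2 - 2/((c : ℝ) + 12) := by
    intro x hx
    rw [hT] at hx
    rcases Multiset.mem_add.mp hx with h | h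
    · simp only [Multiset.insert_eq_cons, Multiset.mem_cons, Multiset.mem_singleton] at h
      rcases h with rfl | rfl | rfl <;> linarith
    · obtain ⟨k, hk, rfl⟩ := Multiset.mem_map.mp h
      rw [Finset.mem_val, Finset.mem_Icc] at hk
      have hk' : (k:ℝ) ≤ (c:ℝ) + 10 := by exact_mod_cast Nat.cast_le.mpr hk.2
      have : (k:ℝ)/((c:ℝ)+12) ≤ ((c:ℝ)+10)/((c:ℝ)+12) :=
        (div_le_div_iff_of_pos_right hdpos).mpr hk'
      linarith
  -- sum of T
  have hsum : T.sum = 29/12 + ((c:ℝ)+10)/2 + (((c:ℝ)+10)*(((c:ℝ)+10)+1)/2)/((c:ℝ)+12) := by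
    rw [hT, Multiset.sum_add]
    have h1 : ({5/12, 11/12, 13/12} : Multiset ℝ).sum = 29/12 := by
      norm_num [Multiset.insert_eq_cons]
    have h2 : (Multiset.map (fun k : ℕ => 1/2 + (k : ℝ) / ((c : ℝ) + 12))
        (Finset.Icc 1 (c + 10)).val).sum
        = ∑ k ∈ Finset.Icc 1 (c+10), (1/2 + (k : ℝ) / ((c : ℝ) + 12)) := rfl
    rw [h1, h2, Finset.sum_add_distrib, Finset.sum_const, ← Finset.sum_div, sum_icc_id',
      Nat.card_Icc]
    push_cast
    ring
  -- sum of squares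
  have hsq : (Multiset.map (fun x => (x - avT) ^ 2) T).sum
      = (5/12-avT)^2 + (11/12-avT)^2 + (13/12-avT)^2
        + (((c:ℝ)+10)*(1/2-avT)^2
          + (2*(1/2-avT)/((c:ℝ)+12))*(((c:ℝ)+10)*(((c:ℝ)+10)+1)/2)
          + (((c:ℝ)+10)*(((c:ℝ)+10)+1)*(2*((c:ℝ)+10)+1)/6)/(((c:ℝ)+12)^2)) := by
    rw [hT, Multiset.map_add, Multiset.sum_add, Multiset.map_map]
    have h1 : (Multiset.map (fun x => (x - avT) ^ 2) ({5/12, 11/12, 13/12} : Multiset ℝ)).sum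
        = (5/12-avT)^2 + (11/12-avT)^2 + (13/12-avT)^2 := by
      norm_num [Multiset.insert_eq_cons]
      ring
    have h2 : (Multiset.map ((fun x => (x - avT) ^ 2) ∘ fun k : ℕ => 1/2 + (k : ℝ) / ((c : ℝ) + 12))
        (Finset.Icc 1 (c + 10)).val).sum
        = ∑ k ∈ Finset.Icc 1 (c+10), ((1/2 + (k : ℝ) / ((c : ℝ) + 12)) - avT) ^ 2 := rfl
    rw [h1, h2]
    have key : ∀ k ∈ Finset.Icc 1 (c+10),
        ((1/2 + (k:ℝ)/((c:ℝ)+12)) - avT)^2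
        = (1/2-avT)^2 + (2*(1/2-avT)/((c:ℝ)+12))*(k:ℝ) + (k:ℝ)^2/(((c:ℝ)+12)^2) := by
      intro k _
      field_simp
      ring
    rw [Finset.sum_congr rfl key, Finset.sum_add_distrib, Finset.sum_add_distrib,
      Finset.sum_const, ← Finset.mul_sum, ← Finset.sum_div, sum_icc_id', sum_icc_sq',
      Nat.card_Icc]
    push_cast
    ring
  -- the main identity
  have heq : (Multiset.map (fun x => (x - avT) ^ 2) T).sum
        - ((τ : ℝ) / 12) * ((3/2 - 2/((c : ℝ) + 12)) - 5/12)
      = -((c : ℝ) ^ 4 + 59 * (c : ℝ) ^ 3 + 1247 * (c : ℝ) ^ 2 + 10992 * (c : ℝ) + 33840)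
          / (144 * (c : ℝ) ^ 3 + 5328 * (c : ℝ) ^ 2 + 65664 * (c : ℝ) + 269568) := by
    have hτ' : (τ : ℝ) = (c:ℝ) + 13 := by rw [hτ]; push_cast; ring
    have hτne : (c:ℝ) + 13 ≠ 0 := by positivity
    have hden : (144 * (c : ℝ) ^ 3 + 5328 * (c : ℝ) ^ 2 + 65664 * (c : ℝ) + 269568) ≠ 0 := by
      positivity
    rw [hsq, havT, hsum, hτ']
    field_simp
    ring
  have hneg : (Multiset.map (fun x => (x - avT) ^ 2) T).sum
        - ((τ : ℝ) / 12) * ((3/2 - 2/((c : ℝ) + 12)) - 5/12) < 0 := by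
    rw [heq]
    have hN : (0:ℝ) < (c : ℝ) ^ 4 + 59 * (c : ℝ) ^ 3 + 1247 * (c : ℝ) ^ 2 + 10992 * (c : ℝ) + 33840 := by
      positivity
    have hD : (0:ℝ) < 144 * (c : ℝ) ^ 3 + 5328 * (c : ℝ) ^ 2 + 65664 * (c : ℝ) + 269568 := by
      positivity
    rw [neg_div]
    simpa using div_pos hN hD
  exact ⟨hcard, hmin_mem, hlow, hmax_mem, hup, heq, hneg⟩
end

section
/- (Section 9, conclusion: the generalized Hertling inequality holds when μ − τ ≤ 2 for the spectra with Puiseux pairs (3,2),(c,2).) Let c be a positive integer and let S be the finite family of c+15 rational numbers consisting of 5/12, 11/12, 13/12, 19/12 together with 1/2 + k/(c+12) for k = 1, 2, …, c+11. Let T be obtained from S by removing the element 19/12 and at most one further element β with β ≥ 17/12 (= 5/12 + 1). Then Var_T < (1/12)·(max T − min T), i.e. δ_T < 0. -/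
private lemma sumIcc1 (N : ℕ) : ∑ k ∈ Finset.Icc 1 N, (k:ℝ) = N*(N+1)/2 := by
  induction N with
  | zero => simp
  | succ m ih =>
    rw [Finset.sum_Icc_succ_top (by omega)]
    push_cast [ih]; ring

private lemma sumIcc2 (N : ℕ) : ∑ k ∈ Finset.Icc 1 N, (k:ℝ)^2 = N*(N+1)*(2*N+1)/6 := by
  induction N with
  | zero => simp
  | succ m ih =>
    rw [Finset.sum_Icc_succ_top (by omega)]
    push_cast [ih]; ring

private lemma shift_sum_s10 (T : Multiset ℝ) (a : ℝ) :
    (Multiset.map (fun x => (x - a)^2) T).sum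
      = (Multiset.map (fun x => x^2) T).sum - 2*a*T.sum + T.card * a^2 := by
  induction T using Multiset.induction_on with
  | empty => simp
  | cons x s ih =>
    simp only [Multiset.map_cons, Multiset.sum_cons, Multiset.card_cons]
    push_cast
    rw [ih]; ring

private lemma erase_map_sum (s : Multiset ℝ) (a : ℝ) (h : a ∈ s) (f : ℝ → ℝ) :
    (Multiset.map f (s.erase a)).sum = (Multiset.map f s).sum - f a := by
  rw [← Multiset.cons_erase h]
  simp [Multiset.erase_cons_head]

private lemma erase_card (s : Multiset ℝ) (a : ℝ) (h : a ∈ s) :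
    ((s.erase a).card : ℝ) = (s.card : ℝ) - 1 := by
  rw [Multiset.card_erase_of_mem h]
  have h1 : 1 ≤ s.card := Multiset.card_pos.mpr (by rintro rfl; simp at h)
  rw [Nat.pred_eq_sub_one, Nat.cast_sub h1]
  simp

/-- variance sum is at most the second moment around any point -/
private lemma var_le (T : Multiset ℝ) (hT : T.card ≠ 0) (avT : ℝ)
    (havT : avT = (1 / (T.card : ℝ)) * T.sum) :
    (Multiset.map (fun x => (x - avT) ^ 2) T).sum
      ≤ (Multiset.map (fun x => (x - 1) ^ 2) T).sum := by
  have hcpos : (0:ℝ) < T.card := by positivity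
  have hsum : T.sum = (T.card : ℝ) * avT := by
    rw [havT]; field_simp
  have h1 := shift_sum_s10 T avT
  have h2 := shift_sum_s10 T 1
  rw [hsum] at h1 h2
  nlinarith [mul_nonneg (le_of_lt hcpos) (sq_nonneg (avT - 1))]

set_option maxHeartbeats 1000000 in
/-- Section 9, conclusion: let `S` be the spectrum `{5/12, 11/12, 13/12, 19/12} ∪
{1/2 + k/(c+12) : 1 ≤ k ≤ c+11}` and let `T` be obtained from `S` by removing `19/12` and
at most one further element `β ≥ 17/12`.  Then `Var_T < (1/12)(max T − min T)`. -/
theorem stmt10 (c : ℕ) (hc : 0 < c)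
    (S T : Multiset ℝ)
    (hS : S = ({5/12, 11/12, 13/12, 19/12} : Multiset ℝ)
      + Multiset.map (fun k : ℕ => 1/2 + (k : ℝ) / ((c : ℝ) + 12)) (Finset.Icc 1 (c + 11)).val)
    (hT : T = S.erase (19/12) ∨
      ∃ β ∈ S.erase (19/12), (17/12 : ℝ) ≤ β ∧ T = (S.erase (19/12)).erase β)
    (avT : ℝ) (havT : avT = (1 / (T.card : ℝ)) * T.sum)
    (m M : ℝ) (hm : m ∈ T) (hM : M ∈ T)
    (hmin : ∀ x ∈ T, m ≤ x) (hmax : ∀ x ∈ T, x ≤ M) :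
    (1 / (T.card : ℝ)) * (Multiset.map (fun x => (x - avT) ^ 2) T).sum
      < (1 / 12) * (M - m) := by
  have hc1 : (1:ℝ) ≤ (c:ℝ) := by exact_mod_cast hc
  set n : ℝ := (c:ℝ) + 12 with hn
  have hn13 : (13:ℝ) ≤ n := by linarith
  have hnpos : (0:ℝ) < n := by linarith
  have hn0 : n ≠ 0 := ne_of_gt hnpos
  -- card of S
  have hScard : (S.card : ℝ) = n + 3 := by
    rw [hS]
    simp [Multiset.card_add, Nat.card_Icc]
    push_cast
    ring
  -- second moment of S about 1
  have hQf : (Multiset.map (fun x => (x - 1) ^ 2) S).sum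
      = n/12 - 1/4 + (1/n)/6 + 25/36 := by
    rw [hS]
    rw [Multiset.map_add, Multiset.sum_add, Multiset.map_map]
    have hlit : (Multiset.map (fun x => (x - 1) ^ 2)
        ({5/12, 11/12, 13/12, 19/12} : Multiset ℝ)).sum = 25/36 := by
      simp only [Multiset.insert_eq_cons, Multiset.map_cons, Multiset.map_singleton,
        Multiset.sum_cons, Multiset.sum_singleton]
      norm_num
    rw [hlit]
    have hfin : (Multiset.map ((fun x => (x - 1) ^ 2) ∘
          (fun k : ℕ => 1/2 + (k : ℝ) / n)) (Finset.Icc 1 (c + 11)).val).sum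
        = ∑ k ∈ Finset.Icc 1 (c+11), ((1/2 + (k:ℝ)/n) - 1)^2 := rfl
    rw [hfin]
    have step : ∀ k ∈ Finset.Icc 1 (c+11),
        ((1/2 + (k:ℝ)/n) - 1)^2 = (k:ℝ)^2 * (1/n^2) - (k:ℝ) * (1/n) + 1/4 := by
      intro k _
      field_simp
      ring
    rw [Finset.sum_congr rfl step, Finset.sum_add_distrib, Finset.sum_sub_distrib,
      ← Finset.sum_mul, ← Finset.sum_mul, sumIcc2, sumIcc1, Finset.sum_const, Nat.card_Icc]
    have hcc : ((c + 11 + 1 - 1 : ℕ) : ℝ) = n - 1 := by push_cast [hn]; ring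
    push_cast
    rw [hn]
    field_simp
    ring
  -- memberships in S
  have hmem19 : (19/12 : ℝ) ∈ S := by
    rw [hS, Multiset.mem_add]
    left; simp
  have hmem512 : (5/12 : ℝ) ∈ S := by
    rw [hS, Multiset.mem_add]
    left; simp
  have ha1mem : (1/2 + ((c+11 : ℕ):ℝ)/n) ∈ S := by
    rw [hS, Multiset.mem_add]
    right
    exact Multiset.mem_map_of_mem _ (by simp [Finset.mem_Icc])
  have ha2mem : (1/2 + ((c+10 : ℕ):ℝ)/n) ∈ S := by
    rw [hS, Multiset.mem_add]
    right
    exact Multiset.mem_map_of_mem _ (by simp [Finset.mem_Icc])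
  have ha1v : (1/2 + ((c+11 : ℕ):ℝ)/n) = 3/2 - 1/n := by
    push_cast
    rw [hn]; field_simp; ring
  have ha2v : (1/2 + ((c+10 : ℕ):ℝ)/n) = 3/2 - 2/n := by
    push_cast
    rw [hn]; field_simp; ring
  have hb1 : (3/2 - 1/n : ℝ) ∈ S := ha1v ▸ ha1mem
  have hb2 : (3/2 - 2/n : ℝ) ∈ S := ha2v ▸ ha2mem
  have h1nlt : 1/n ≤ 1/13 := by
    rw [div_le_div_iff₀ hnpos (by norm_num)]; linarith
  have h1npos : (0:ℝ) < 1/n := by positivity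
  have hne19a : (3/2 - 1/n : ℝ) ≠ 19/12 := by
    intro h; nlinarith
  have hne19b : (3/2 - 2/n : ℝ) ≠ 19/12 := by
    intro h
    have h2 : (0:ℝ) < 2/n := by positivity
    linarith
  have hne19c : (5/12 : ℝ) ≠ 19/12 := by norm_num
  -- facts about S' := S.erase (19/12)
  set S' : Multiset ℝ := S.erase (19/12) with hS'
  have hb1' : (3/2 - 1/n : ℝ) ∈ S' := (Multiset.mem_erase_of_ne hne19a).mpr hb1
  have hb2' : (3/2 - 2/n : ℝ) ∈ S' := (Multiset.mem_erase_of_ne hne19b).mpr hb2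
  have h512' : (5/12 : ℝ) ∈ S' := (Multiset.mem_erase_of_ne hne19c).mpr hmem512
  have hS'card : ((S'.card : ℕ) : ℝ) = n + 2 := by
    rw [hS', erase_card S _ hmem19, hScard]; ring
  have hQ' : (Multiset.map (fun x => (x - 1) ^ 2) S').sum
      = n/12 - 1/4 + (1/n)/6 + 25/36 - 49/144 := by
    rw [hS', erase_map_sum S _ hmem19, hQf]
    norm_num
  -- case split
  rcases hT with hT | ⟨β, hβS, hβ17, hT⟩
  · -- no extra element removed
    have hTcard : ((T.card : ℕ) : ℝ) = n + 2 := by rw [hT]; exact hS'card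
    have hTc0 : T.card ≠ 0 := by
      intro h
      rw [h] at hTcard; simp at hTcard; linarith
    have hQT : (Multiset.map (fun x => (x - 1) ^ 2) T).sum
        = n/12 - 1/4 + (1/n)/6 + 25/36 - 49/144 := by rw [hT]; exact hQ'
    have hvar := var_le T hTc0 avT havT
    have hMge : 3/2 - 1/n ≤ M := hmax _ (hT ▸ hb1')
    have hmle : m ≤ 5/12 := hmin _ (hT ▸ h512')
    rw [hQT] at hvar
    rw [hTcard]
    have hun : (1/n) * n = 1 := by field_simp
    have hfrac : (0:ℝ) < 1/(n+2) := by positivity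
    calc 1/(n+2) * (Multiset.map (fun x => (x - avT) ^ 2) T).sum
        ≤ 1/(n+2) * (n/12 - 1/4 + (1/n)/6 + 25/36 - 49/144) :=
          mul_le_mul_of_nonneg_left hvar (le_of_lt hfrac)
      _ < 1/12 * (13/12 - 1/n) := by
          rw [show 1/(n+2) * (n/12 - 1/4 + (1/n)/6 + 25/36 - 49/144)
              = (n/12 - 1/4 + (1/n)/6 + 25/36 - 49/144)/(n+2) from by ring,
            div_lt_iff₀ (by linarith : (0:ℝ) < n+2)]
          nlinarith [hun, h1nlt, hn13]
      _ ≤ 1/12 * (M - m) := by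
          apply mul_le_mul_of_nonneg_left _ (by norm_num : (0:ℝ) ≤ 1/12)
          linarith
  · -- extra element β removed
    have hβ1 : ((17:ℝ)/12 - 1)^2 ≤ (β - 1)^2 :=
      pow_le_pow_left₀ (by norm_num) (by linarith) 2
    have hTcard : ((T.card : ℕ) : ℝ) = n + 1 := by
      rw [hT, erase_card S' _ hβS, hS'card]; ring
    have hTc0 : T.card ≠ 0 := by
      intro h; rw [h] at hTcard; simp at hTcard; linarith
    have hQT : (Multiset.map (fun x => (x - 1) ^ 2) T).sum
        = n/12 - 1/4 + (1/n)/6 + 25/36 - 49/144 - (β-1)^2 := by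
      rw [hT, erase_map_sum S' _ hβS, hQ']
    have hvar := var_le T hTc0 avT havT
    have hmle : m ≤ 5/12 := by
      apply hmin
      rw [hT]
      refine (Multiset.mem_erase_of_ne ?_).mpr h512'
      intro h; rw [← h] at hβ17; linarith
    have hMge : 3/2 - 2/n ≤ M := by
      by_cases hβa : β = 3/2 - 1/n
      · have : (3/2 - 2/n : ℝ) ∈ T := by
          rw [hT]
          refine (Multiset.mem_erase_of_ne ?_).mpr hb2'
          rw [hβa]; intro h
          have e : (2:ℝ)/n - 1/n = 1/n := by ring
          have e2 : (3:ℝ)/2 - 2/n = 3/2 - 1/n := h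
          linarith
        exact hmax _ this
      · have : (3/2 - 1/n : ℝ) ∈ T := by
          rw [hT]
          exact (Multiset.mem_erase_of_ne (fun h => hβa h.symm)).mpr hb1'
        have h2 := hmax _ this
        have e : (2:ℝ)/n - 1/n = 1/n := by ring
        linarith
    rw [hQT] at hvar
    rw [hTcard]
    have h25 : (25:ℝ)/144 ≤ (β - 1)^2 := by norm_num at hβ1; linarith
    have hvar2 : (Multiset.map (fun x => (x - avT) ^ 2) T).sum
        ≤ n/12 - 1/4 + (1/n)/6 + 25/36 - 49/144 - 25/144 := by linarith
    have hun : (1/n) * n = 1 := by field_simp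
    have hfrac : (0:ℝ) < 1/(n+1) := by positivity
    have h2n : (2:ℝ)/n = 2*(1/n) := by ring
    calc 1/(n+1) * (Multiset.map (fun x => (x - avT) ^ 2) T).sum
        ≤ 1/(n+1) * (n/12 - 1/4 + (1/n)/6 + 25/36 - 49/144 - 25/144) :=
          mul_le_mul_of_nonneg_left hvar2 (le_of_lt hfrac)
      _ < 1/12 * (13/12 - 2*(1/n)) := by
          rw [show 1/(n+1) * (n/12 - 1/4 + (1/n)/6 + 25/36 - 49/144 - 25/144)
              = (n/12 - 1/4 + (1/n)/6 + 25/36 - 49/144 - 25/144)/(n+1) from by ring,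
            div_lt_iff₀ (by linarith : (0:ℝ) < n+1)]
          nlinarith [hun, h1nlt, hn13]
      _ ≤ 1/12 * (M - m) := by
          apply mul_le_mul_of_nonneg_left _ (by norm_num : (0:ℝ) ≤ 1/12)
          linarith [h2n]
end

section
/- (Hertling's equality for Brieskorn–Pham polynomials.) Let n ≥ 1 and let a₁, …, aₙ be integers with each aᵢ ≥ 2. Consider the μ := Π_{i=1}^{n}(aᵢ−1) real numbers α_k := Σ_{i=1}^{n} kᵢ/aᵢ, indexed by tuples k = (k₁,…,kₙ) with 1 ≤ kᵢ ≤ aᵢ−1. Then their mean equals n/2, the minimum is Σᵢ 1/aᵢ, the maximum is Σᵢ (aᵢ−1)/aᵢ, and (1/μ)·Σ_k (α_k − n/2)² = (1/12)·(Σᵢ (aᵢ−1)/aᵢ − Σᵢ 1/aᵢ); that is, the variance of the spectral numbers equals exactly (1/12)(α_max − α_min). -/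
/-!
Write `α_k - n/2 = ∑ᵢ βᵢ(kᵢ)` with `βᵢ(x) = x/aᵢ - 1/2`. As `k` runs over the box of exponent
tuples, the coordinates behave like independent uniform variables, and each `βᵢ` is centred on
`[1, aᵢ - 1]`; so the mean is `n/2` and, the cross terms vanishing, the variance is the sum of the
one-variable variances `(aᵢ - 2)/(12 aᵢ) = ((aᵢ - 1)/aᵢ - 1/aᵢ)/12`.
-/

open Finset

namespace Fintype

variable {ι κ R : Type*} [Fintype ι] [DecidableEq ι] [CommSemiring R] (t : ι → Finset κ)

theorem sum_piFinset_apply_eq_mul (i : ι) (f : κ → R) :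
    ∑ k ∈ piFinset t, f (k i)
      = (∏ j ∈ univ.erase i, (#(t j) : R)) * ∑ x ∈ t i, f x := by
  calc ∑ k ∈ piFinset t, f (k i)
      = ∑ k ∈ piFinset t, ∏ l, (if l = i then f (k l) else 1) := by
        simp only [Finset.prod_ite_eq', mem_univ, if_true]
    _ = ∏ l, ∑ x ∈ t l, (if l = i then f x else 1) :=
        (Finset.prod_univ_sum t fun l x => if l = i then f x else 1).symm
    _ = _ := by
        rw [← prod_erase_mul univ _ (mem_univ i)]
        congr 1
        · refine Finset.prod_congr rfl fun j hj => ?_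
          simp [ne_of_mem_erase hj]
        · simp

theorem sum_piFinset_mul_apply_eq_zero {i j : ι} (hij : i ≠ j) (f g : κ → R)
    (hf : ∑ x ∈ t i, f x = 0) : ∑ k ∈ piFinset t, f (k i) * g (k j) = 0 := by
  calc ∑ k ∈ piFinset t, f (k i) * g (k j)
      = ∑ k ∈ piFinset t, ∏ l, (if l = i then f (k l) else if l = j then g (k l) else 1) := by
        refine Finset.sum_congr rfl fun k _ => ?_
        rw [Fintype.prod_eq_mul i j hij fun l hl => by simp [hl.1, hl.2]]
        simp [hij.symm]
    _ = ∏ l, ∑ x ∈ t l, (if l = i then f x else if l = j then g x else 1) :=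
        (Finset.prod_univ_sum t fun l x => if l = i then f x else if l = j then g x else 1).symm
    _ = 0 := prod_eq_zero (mem_univ i) (by simpa using hf)

theorem sum_piFinset_sum_apply_sq {f : ι → κ → R} (hf : ∀ i, ∑ x ∈ t i, f i x = 0) :
    ∑ k ∈ piFinset t, (∑ i, f i (k i)) ^ 2
      = ∑ i, (∏ j ∈ univ.erase i, (#(t j) : R)) * ∑ x ∈ t i, f i x ^ 2 := by
  simp_rw [sq, sum_mul_sum]
  rw [Finset.sum_comm]
  refine Finset.sum_congr rfl fun i _ => ?_
  rw [Finset.sum_comm, Finset.sum_eq_single i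
    (fun j _ hji => sum_piFinset_mul_apply_eq_zero t hji.symm _ _ (hf i)) (by simp)]
  exact sum_piFinset_apply_eq_mul t i fun x => f i x * f i x

end Fintype

theorem sum_Icc_one_natCast (m : ℕ) : ∑ x ∈ Icc 1 m, (x : ℝ) = m * (m + 1) / 2 := by
  induction m with
  | zero => simp
  | succ m ih =>
    rw [sum_Icc_succ_top (by omega), ih]
    push_cast
    ring

theorem sum_Icc_one_natCast_sq (m : ℕ) :
    ∑ x ∈ Icc 1 m, (x : ℝ) ^ 2 = m * (m + 1) * (2 * m + 1) / 6 := by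
  induction m with
  | zero => simp
  | succ m ih =>
    rw [sum_Icc_succ_top (by omega), ih]
    push_cast
    ring


theorem sum_Icc_div_sub_half {a : ℕ} (ha : 0 < a) :
    ∑ x ∈ Icc 1 (a - 1), ((x : ℝ) / a - 1 / 2) = 0 := by
  obtain ⟨m, rfl⟩ := Nat.exists_eq_add_of_lt ha
  simp only [zero_add, Nat.add_sub_cancel, sum_sub_distrib, ← sum_div, sum_Icc_one_natCast,
    sum_const, Nat.card_Icc, nsmul_eq_mul]
  push_cast
  field_simp
  ring

theorem sum_Icc_div_sub_half_sq {a : ℕ} (ha : 0 < a) :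
    ∑ x ∈ Icc 1 (a - 1), ((x : ℝ) / a - 1 / 2) ^ 2
      = ((a : ℝ) - 1) * ((a : ℝ) - 2) / (12 * a) := by
  obtain ⟨m, rfl⟩ := Nat.exists_eq_add_of_lt ha
  have expand : ∀ x : ℕ, ((x : ℝ) / (m + 1 : ℕ) - 1 / 2) ^ 2
      = (x : ℝ) ^ 2 / (m + 1 : ℕ) ^ 2 - (x : ℝ) / (m + 1 : ℕ) + 1 / 4 := fun x => by ring
  simp only [zero_add, Nat.add_sub_cancel, expand, sum_add_distrib, sum_sub_distrib, ← sum_div,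
    sum_Icc_one_natCast, sum_Icc_one_natCast_sq, sum_const, Nat.card_Icc, nsmul_eq_mul]
  push_cast
  field_simp
  ring

theorem natCast_card_Icc_one_sub_one {a : ℕ} (ha : 0 < a) :
    (#(Icc 1 (a - 1)) : ℝ) = a - 1 := by
  rw [Nat.card_Icc, Nat.add_sub_cancel, Nat.cast_sub ha, Nat.cast_one]

section BrieskornPham

variable {ι : Type*} [Fintype ι] (a : ι → ℕ)

noncomputable def spectralNumber (k : ι → ℕ) : ℝ := ∑ i, (k i : ℝ) / a i

theorem spectralNumber_sub_card_div_two (k : ι → ℕ) :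
    spectralNumber a k - Fintype.card ι / 2 = ∑ i, ((k i : ℝ) / a i - 1 / 2) := by
  simp [spectralNumber, sum_sub_distrib, div_eq_mul_one_div (Fintype.card ι : ℝ)]

variable [DecidableEq ι]

def brieskornPhamIndices : Finset (ι → ℕ) := Fintype.piFinset fun i => Icc 1 (a i - 1)

variable {a}

theorem mem_brieskornPhamIndices {k : ι → ℕ} :
    k ∈ brieskornPhamIndices a ↔ ∀ i, 1 ≤ k i ∧ k i ≤ a i - 1 := by
  simp [brieskornPhamIndices]

theorem card_brieskornPhamIndices : #(brieskornPhamIndices a) = ∏ i, (a i - 1) := by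
  simp [brieskornPhamIndices]

theorem sum_one_div_le_spectralNumber {k : ι → ℕ} (hk : k ∈ brieskornPhamIndices a) :
    ∑ i, (1 : ℝ) / a i ≤ spectralNumber a k :=
  sum_le_sum fun i _ => div_le_div_of_nonneg_right
    (by exact_mod_cast (mem_brieskornPhamIndices.1 hk i).1) (Nat.cast_nonneg _)

theorem spectralNumber_le_sum_sub_one_div {k : ι → ℕ} (hk : k ∈ brieskornPhamIndices a) :
    spectralNumber a k ≤ ∑ i, ((a i : ℝ) - 1) / a i := by
  refine sum_le_sum fun i _ => div_le_div_of_nonneg_right ?_ (Nat.cast_nonneg _)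
  have hki := mem_brieskornPhamIndices.1 hk i
  rw [le_sub_iff_add_le]
  exact_mod_cast (by omega : k i + 1 ≤ a i)

theorem sum_spectralNumber (ha : ∀ i, 0 < a i) :
    ∑ k ∈ brieskornPhamIndices a, spectralNumber a k
      = #(brieskornPhamIndices a) * (Fintype.card ι / 2) := by
  have centered :
      ∑ k ∈ brieskornPhamIndices a, (spectralNumber a k - Fintype.card ι / 2) = 0 := by
    simp only [spectralNumber_sub_card_div_two, brieskornPhamIndices]
    rw [Finset.sum_comm]
    refine sum_eq_zero fun i _ => ?_
    rw [Fintype.sum_piFinset_apply_eq_mul _ i fun x : ℕ => (x : ℝ) / a i - 1 / 2,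
      sum_Icc_div_sub_half (ha i), mul_zero]
  rw [sum_sub_distrib, sub_eq_zero] at centered
  simp [centered]

theorem sum_spectralNumber_sub_sq (ha : ∀ i, 0 < a i) :
    ∑ k ∈ brieskornPhamIndices a, (spectralNumber a k - Fintype.card ι / 2) ^ 2
      = #(brieskornPhamIndices a) * ∑ i, ((a i : ℝ) - 2) / (12 * a i) := by
  simp only [spectralNumber_sub_card_div_two, brieskornPhamIndices]
  rw [Fintype.sum_piFinset_sum_apply_sq _ fun i => sum_Icc_div_sub_half (ha i), Finset.mul_sum]
  refine Finset.sum_congr rfl fun i _ => ?_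
  rw [sum_Icc_div_sub_half_sq (ha i), Fintype.card_piFinset, Nat.cast_prod,
    ← prod_erase_mul _ _ (mem_univ i), natCast_card_Icc_one_sub_one (ha i)]
  have : (a i : ℝ) ≠ 0 := by exact_mod_cast (ha i).ne'
  field_simp

end BrieskornPham

theorem stmt12_general (n : ℕ) (a : Fin n → ℕ) (ha : ∀ i, 2 ≤ a i)
    (μ : ℕ) (hμ : μ = ∏ i, (a i - 1))
    (K : Finset (Fin n → ℕ))
    (hK : K = Fintype.piFinset (fun i => Finset.Icc 1 (a i - 1)))
    (α : (Fin n → ℕ) → ℝ) (hα : ∀ k, α k = ∑ i, (k i : ℝ) / (a i)) :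
    K.card = μ ∧
    (1 / (μ : ℝ)) * ∑ k ∈ K, α k = (n : ℝ) / 2 ∧
    ((fun _ => 1) ∈ K) ∧ α (fun _ => 1) = ∑ i, (1 : ℝ) / (a i) ∧
    (∀ k ∈ K, ∑ i, (1 : ℝ) / (a i) ≤ α k) ∧
    ((fun i => a i - 1) ∈ K) ∧ α (fun i => a i - 1) = ∑ i, ((a i : ℝ) - 1) / (a i) ∧
    (∀ k ∈ K, α k ≤ ∑ i, ((a i : ℝ) - 1) / (a i)) ∧
    (1 / (μ : ℝ)) * ∑ k ∈ K, (α k - (n : ℝ) / 2) ^ 2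
      = (1 / 12) * (∑ i, ((a i : ℝ) - 1) / (a i) - ∑ i, (1 : ℝ) / (a i)) := by
  obtain rfl : K = brieskornPhamIndices a := hK
  obtain rfl : α = spectralNumber a := funext hα
  rw [← card_brieskornPhamIndices] at hμ
  subst hμ
  have ha₀ : ∀ i, 0 < a i := fun i => zero_lt_two.trans_le (ha i)
  have one_mem : (fun _ => 1) ∈ brieskornPhamIndices a :=
    mem_brieskornPhamIndices.2 fun i => ⟨le_rfl, by have := ha i; omega⟩
  have hμ₀ : (#(brieskornPhamIndices a) : ℝ) ≠ 0 :=
    Nat.cast_ne_zero.2 (card_ne_zero_of_mem one_mem)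
  refine ⟨rfl, ?_, one_mem, by simp [spectralNumber], fun k => sum_one_div_le_spectralNumber,
    mem_brieskornPhamIndices.2 fun i => ⟨by have := ha i; omega, le_rfl⟩, ?_,
    fun k => spectralNumber_le_sum_sub_one_div, ?_⟩
  · rw [sum_spectralNumber ha₀, Fintype.card_fin]
    field_simp
  · simp [spectralNumber, Nat.cast_sub (ha₀ _)]
  · have variance := sum_spectralNumber_sub_sq ha₀
    rw [Fintype.card_fin] at variance
    rw [variance, one_div, inv_mul_cancel_left₀ hμ₀, ← sum_sub_distrib, mul_sum]
    refine Finset.sum_congr rfl fun i _ => ?_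
    ring

/-- Hertling's equality for Brieskorn–Pham polynomials: the `μ = Π(aᵢ−1)` spectral numbers
`α_k = Σᵢ kᵢ/aᵢ` (with `1 ≤ kᵢ ≤ aᵢ−1`) have mean `n/2`, minimum `Σᵢ 1/aᵢ`, maximum
`Σᵢ (aᵢ−1)/aᵢ`, and their variance equals `(1/12)(α_max − α_min)`. -/
theorem stmt12 (n : ℕ) (hn : 1 ≤ n) (a : Fin n → ℕ) (ha : ∀ i, 2 ≤ a i)
    (μ : ℕ) (hμ : μ = ∏ i, (a i - 1))
    (K : Finset (Fin n → ℕ))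
    (hK : K = Fintype.piFinset (fun i => Finset.Icc 1 (a i - 1)))
    (α : (Fin n → ℕ) → ℝ) (hα : ∀ k, α k = ∑ i, (k i : ℝ) / (a i)) :
    K.card = μ ∧
    (1 / (μ : ℝ)) * ∑ k ∈ K, α k = (n : ℝ) / 2 ∧
    ((fun _ => 1) ∈ K) ∧ α (fun _ => 1) = ∑ i, (1 : ℝ) / (a i) ∧
    (∀ k ∈ K, ∑ i, (1 : ℝ) / (a i) ≤ α k) ∧
    ((fun i => a i - 1) ∈ K) ∧ α (fun i => a i - 1) = ∑ i, ((a i : ℝ) - 1) / (a i) ∧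
    (∀ k ∈ K, α k ≤ ∑ i, ((a i : ℝ) - 1) / (a i)) ∧
    (1 / (μ : ℝ)) * ∑ k ∈ K, (α k - (n : ℝ) / 2) ^ 2
      = (1 / 12) * (∑ i, ((a i : ℝ) - 1) / (a i) - ∑ i, (1 : ℝ) / (a i)) :=
  stmt12_general n a ha μ hμ K hK α hα
end
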